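/- arXiv:1909.05351 — 2 statements merged into one kernel-verified Lean document; each statement's English description precedes it below -/
import Mathlib

section
/- The Hamiltonian of the rotating Kepler problem F(q,p) = |p|²/2 − 1/|q| + q₁p₂ − q₂p₁ on T*(ℝ² \ {0}) has exactly one critical value, equal to −3/2. -/
/-- The rotating Kepler Hamiltonian `F(q,p) = |p|²/2 - 1/|q| + q₁p₂ - q₂p₁`
on `T*(ℝ² \ {0})`, with points `((q₁,q₂),(p₁,p₂))`. -/
noncomputable def rotKepler (z : (ℝ × ℝ) × ℝ × ℝ) : ℝ :=
  (z.2.1 ^ 2 + z.2.2 ^ 2) / 2 - 1 / Real.sqrt (z.1.1 ^ 2 + z.1.2 ^ 2) +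
    z.1.1 * z.2.2 - z.1.2 * z.2.1

noncomputable abbrev RK.Q1 : ((ℝ × ℝ) × ℝ × ℝ) →L[ℝ] ℝ :=
  (ContinuousLinearMap.fst ℝ ℝ ℝ).comp (ContinuousLinearMap.fst ℝ (ℝ × ℝ) (ℝ × ℝ))
noncomputable abbrev RK.Q2 : ((ℝ × ℝ) × ℝ × ℝ) →L[ℝ] ℝ :=
  (ContinuousLinearMap.snd ℝ ℝ ℝ).comp (ContinuousLinearMap.fst ℝ (ℝ × ℝ) (ℝ × ℝ))
noncomputable abbrev RK.P1 : ((ℝ × ℝ) × ℝ × ℝ) →L[ℝ] ℝ :=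
  (ContinuousLinearMap.fst ℝ ℝ ℝ).comp (ContinuousLinearMap.snd ℝ (ℝ × ℝ) (ℝ × ℝ))
noncomputable abbrev RK.P2 : ((ℝ × ℝ) × ℝ × ℝ) →L[ℝ] ℝ :=
  (ContinuousLinearMap.snd ℝ ℝ ℝ).comp (ContinuousLinearMap.snd ℝ (ℝ × ℝ) (ℝ × ℝ))

noncomputable def RK.L (z : (ℝ × ℝ) × ℝ × ℝ) : ((ℝ × ℝ) × ℝ × ℝ) →L[ℝ] ℝ :=
  (z.1.1 / ((z.1.1 ^ 2 + z.1.2 ^ 2) * Real.sqrt (z.1.1 ^ 2 + z.1.2 ^ 2)) + z.2.2) • RK.Q1 +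
  (z.1.2 / ((z.1.1 ^ 2 + z.1.2 ^ 2) * Real.sqrt (z.1.1 ^ 2 + z.1.2 ^ 2)) - z.2.1) • RK.Q2 +
  (z.2.1 - z.1.2) • RK.P1 + (z.2.2 + z.1.1) • RK.P2

lemma RK.hasFDerivAt (z : (ℝ × ℝ) × ℝ × ℝ) (hz : z.1 ≠ 0) :
    HasFDerivAt rotKepler (RK.L z) z := by
  have hs : z.1.1 ^ 2 + z.1.2 ^ 2 ≠ 0 := by
    intro h
    apply hz
    have h1 : z.1.1 = 0 ∧ z.1.2 = 0 := by
      constructor <;> nlinarith [sq_nonneg z.1.1, sq_nonneg z.1.2]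
    exact Prod.ext h1.1 h1.2
  have hspos : 0 < z.1.1 ^ 2 + z.1.2 ^ 2 := by
    rcases lt_or_eq_of_le (by positivity : (0:ℝ) ≤ z.1.1 ^ 2 + z.1.2 ^ 2) with h | h
    · exact h
    · exact absurd h.symm hs
  have hrpos : 0 < Real.sqrt (z.1.1 ^ 2 + z.1.2 ^ 2) := Real.sqrt_pos.mpr hspos
  have hr : Real.sqrt (z.1.1 ^ 2 + z.1.2 ^ 2) ≠ 0 := ne_of_gt hrpos
  have hQ1 : HasFDerivAt (fun z : (ℝ × ℝ) × ℝ × ℝ => z.1.1) RK.Q1 z := RK.Q1.hasFDerivAt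
  have hQ2 : HasFDerivAt (fun z : (ℝ × ℝ) × ℝ × ℝ => z.1.2) RK.Q2 z := RK.Q2.hasFDerivAt
  have hP1 : HasFDerivAt (fun z : (ℝ × ℝ) × ℝ × ℝ => z.2.1) RK.P1 z := RK.P1.hasFDerivAt
  have hP2 : HasFDerivAt (fun z : (ℝ × ℝ) × ℝ × ℝ => z.2.2) RK.P2 z := RK.P2.hasFDerivAt
  have hkin := ((hP1.mul hP1).add (hP2.mul hP2)).const_mul (2⁻¹ : ℝ)
  have hS := (hQ1.mul hQ1).add (hQ2.mul hQ2)
  have hs' : z.1.1 * z.1.1 + z.1.2 * z.1.2 ≠ 0 := by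
    rw [← pow_two, ← pow_two]; exact hs
  have hr' : Real.sqrt (z.1.1 * z.1.1 + z.1.2 * z.1.2) ≠ 0 := by
    rw [← pow_two z.1.1, ← pow_two z.1.2]; exact hr
  have hsqrt := hS.sqrt hs'
  have hinv := (hasDerivAt_inv hr').comp_hasFDerivAt z hsqrt
  have hm1 := hQ1.mul hP2
  have hm2 := hQ2.mul hP1
  have H := ((hkin.add hinv.neg).add hm1).sub hm2
  have Hfun : (fun z : (ℝ × ℝ) × ℝ × ℝ =>
      (2⁻¹ * (z.2.1 * z.2.1 + z.2.2 * z.2.2) + -(Real.sqrt (z.1.1 * z.1.1 + z.1.2 * z.1.2))⁻¹ +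
        z.1.1 * z.2.2 - z.1.2 * z.2.1)) = rotKepler := by
    funext w; simp only [rotKepler]; ring_nf
  simp only [Function.comp_def, Pi.mul_def, Pi.add_def, Pi.neg_def, Pi.sub_def] at H
  rw [Hfun] at H
  refine H.congr_fderiv ?_
  have hss : z.1.1 * z.1.1 + z.1.2 * z.1.2 = z.1.1 ^ 2 + z.1.2 ^ 2 := by ring
  rw [hss]
  ext <;>
  · simp only [RK.L, ContinuousLinearMap.add_apply, ContinuousLinearMap.sub_apply,
      ContinuousLinearMap.neg_apply, ContinuousLinearMap.smul_apply,
      ContinuousLinearMap.coe_comp', Function.comp_apply,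
      ContinuousLinearMap.coe_fst', ContinuousLinearMap.coe_snd', smul_eq_mul,
      Real.sq_sqrt hspos.le]
    field_simp
    try ring


set_option maxHeartbeats 1000000

/-- the rotating Kepler Hamiltonian has exactly one critical
value, equal to `-3/2`. -/
theorem rotKepler_critical_values :
    {c : ℝ | ∃ z : (ℝ × ℝ) × ℝ × ℝ,
        z.1 ≠ 0 ∧ fderiv ℝ rotKepler z = 0 ∧ rotKepler z = c} = {-(3 / 2)} := by
  ext c
  simp only [Set.mem_setOf_eq, Set.mem_singleton_iff]
  constructor
  · rintro ⟨z, hz, hcrit, hval⟩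
    have H := RK.hasFDerivAt z hz
    have hL : RK.L z = 0 := by rw [← H.fderiv]; exact hcrit
    have happ : ∀ v, RK.L z v = 0 := by intro v; simp only [hL, ContinuousLinearMap.zero_apply]
    have hs : z.1.1 ^ 2 + z.1.2 ^ 2 ≠ 0 := by
      intro h
      apply hz
      have h1 : z.1.1 = 0 ∧ z.1.2 = 0 := by
        constructor <;> nlinarith [sq_nonneg z.1.1, sq_nonneg z.1.2]
      exact Prod.ext h1.1 h1.2
    have hspos : 0 < z.1.1 ^ 2 + z.1.2 ^ 2 := by
      rcases lt_or_eq_of_le (by positivity : (0:ℝ) ≤ z.1.1 ^ 2 + z.1.2 ^ 2) with h | h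
      · exact h
      · exact absurd h.symm hs
    have hrpos : 0 < Real.sqrt (z.1.1 ^ 2 + z.1.2 ^ 2) := Real.sqrt_pos.mpr hspos
    have hr2 : (Real.sqrt (z.1.1 ^ 2 + z.1.2 ^ 2)) ^ 2 = z.1.1 ^ 2 + z.1.2 ^ 2 :=
      Real.sq_sqrt hspos.le
    have e1 := happ ((1, 0), (0, 0))
    have e2 := happ ((0, 1), (0, 0))
    have e3 := happ ((0, 0), (1, 0))
    have e4 := happ ((0, 0), (0, 1))
    simp only [RK.L, ContinuousLinearMap.add_apply, ContinuousLinearMap.smul_apply,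
      ContinuousLinearMap.coe_comp', Function.comp_apply,
      ContinuousLinearMap.coe_fst', ContinuousLinearMap.coe_snd', smul_eq_mul, RK.Q1, RK.Q2, RK.P1, RK.P2,
      mul_one, mul_zero, add_zero, zero_add] at e1 e2 e3 e4
    -- e3 : z.2.1 - z.1.2 = 0, e4 : z.2.2 + z.1.1 = 0
    set s := z.1.1 ^ 2 + z.1.2 ^ 2 with hsdef
    set r := Real.sqrt s with hrdef
    clear_value r s
    clear H hL happ hcrit
    have hp1 : z.2.1 = z.1.2 := by linarith
    have hp2 : z.2.2 = -z.1.1 := by linarith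
    rw [hp2] at e1
    rw [hp1] at e2
    -- e1 : z.1.1 / (s * r) + -z.1.1 = 0, e2 : z.1.2 / (s * r) - z.1.2 = 0
    have hsr : 0 < s * r := by positivity
    have f1 : z.1.1 = z.1.1 * (s * r) := by
      field_simp at e1
      linarith
    have f2 : z.1.2 = z.1.2 * (s * r) := by
      field_simp at e2
      linarith
    have hq : z.1.1 ≠ 0 ∨ z.1.2 ≠ 0 := by
      by_contra h
      push_neg at h
      exact hz (Prod.ext h.1 h.2)
    have hsr1 : s * r = 1 := by
      rcases hq with h | h
      · have := mul_left_cancel₀ h (by linarith [f1] : z.1.1 * (s * r) = z.1.1 * 1)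
        linarith
      · have := mul_left_cancel₀ h (by linarith [f2] : z.1.2 * (s * r) = z.1.2 * 1)
        linarith
    have hs1 : s = 1 := by
      have h3 : s ^ 3 = 1 := by
        have : (s * r) ^ 2 = 1 := by rw [hsr1]; norm_num
        have hr2' : r ^ 2 = s := hr2
        nlinarith
      nlinarith [sq_nonneg (s - 1), sq_nonneg (s + 1), hspos]
    have hr1 : r = 1 := by
      have := hsr1
      rw [hs1, one_mul] at this
      exact this
    rw [← hval]
    have hsq : Real.sqrt (z.1.1 ^ 2 + z.1.2 ^ 2) = 1 := by rw [← hsdef, ← hrdef, hr1]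
    have hone : z.1.1 ^ 2 + z.1.2 ^ 2 = 1 := by rw [← hsdef, hs1]
    simp only [rotKepler, hsq, hp1, hp2]
    nlinarith [hone]
  · rintro rfl
    refine ⟨((1, 0), (0, -1)), ?_, ?_, ?_⟩
    · simp [Prod.ext_iff]
    · have H := RK.hasFDerivAt ((1, 0), (0, -1)) (by simp [Prod.ext_iff])
      rw [H.fderiv]
      ext <;>
      · simp [RK.L, RK.Q1, RK.Q2, RK.P1, RK.P2]
    · simp [rotKepler]
      norm_num
end

section
/- For each θ ∈ [0, π], the linear map ρ_θ on ℝ⁴ given by the block matrix with upper-left block [[cos 2θ, sin 2θ],[sin 2θ, −cos 2θ]] acting on (q₁,q₂) and lower-right block [[−cos 2θ, −sin 2θ],[−sin 2θ, cos 2θ]] acting on (p₁,p₂) is an involution, is anti-symplectic for ω₀ = dp₁∧dq₁ + dp₂∧dq₂, and leaves the rotating Kepler Hamiltonian F invariant. -/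
/-- The family of linear involutions `ρ_θ` of the rotating Kepler problem. -/
noncomputable def rhoTheta (θ : ℝ) (z : (ℝ × ℝ) × ℝ × ℝ) : (ℝ × ℝ) × ℝ × ℝ :=
  ((Real.cos (2 * θ) * z.1.1 + Real.sin (2 * θ) * z.1.2,
    Real.sin (2 * θ) * z.1.1 - Real.cos (2 * θ) * z.1.2),
   (-(Real.cos (2 * θ)) * z.2.1 - Real.sin (2 * θ) * z.2.2,
    -(Real.sin (2 * θ)) * z.2.1 + Real.cos (2 * θ) * z.2.2))

/-- The standard symplectic form `ω₀ = dp₁ ∧ dq₁ + dp₂ ∧ dq₂`. -/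
def omega0 (v w : (ℝ × ℝ) × ℝ × ℝ) : ℝ :=
  v.2.1 * w.1.1 - w.2.1 * v.1.1 + v.2.2 * w.1.2 - w.2.2 * v.1.2

/-!
`ρ_θ` acts as `(q, p) ↦ (R q, -R p)` where `R` is the reflection of the plane with matrix
`[[c, s], [s, -c]]`, `c = cos 2θ`, `s = sin 2θ`. Since `R` is a symmetric orthogonal matrix of
determinant `-1`, it is an involution, preserves the dot product and reverses the cross product
`q₁p₂ - q₂p₁`. The extra sign on the momenta then makes `ρ_θ` reverse `ω₀ = ⟨p_v, q_w⟩ - ⟨p_w, q_v⟩`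
while preserving `|p|²`, `|q|` and the angular momentum `q₁p₂ - q₂p₁`, hence `F`.
-/

namespace Plane

def reflect (c s : ℝ) (x : ℝ × ℝ) : ℝ × ℝ :=
  (c * x.1 + s * x.2, s * x.1 - c * x.2)

def dot (x y : ℝ × ℝ) : ℝ :=
  x.1 * y.1 + x.2 * y.2

def cross (x y : ℝ × ℝ) : ℝ :=
  x.1 * y.2 - x.2 * y.1

theorem reflect_neg (c s : ℝ) (x : ℝ × ℝ) : reflect c s (-x) = -reflect c s x := by
  ext <;> simp only [reflect, Prod.fst_neg, Prod.snd_neg] <;> ring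

theorem dot_neg_left (x y : ℝ × ℝ) : dot (-x) y = -dot x y := by
  simp only [dot, Prod.fst_neg, Prod.snd_neg]; ring

theorem dot_neg_right (x y : ℝ × ℝ) : dot x (-y) = -dot x y := by
  simp only [dot, Prod.fst_neg, Prod.snd_neg]; ring

theorem cross_neg_right (x y : ℝ × ℝ) : cross x (-y) = -cross x y := by
  simp only [cross, Prod.fst_neg, Prod.snd_neg]; ring

section Reflection

variable {c s : ℝ} (h : c ^ 2 + s ^ 2 = 1)
include h

theorem reflect_reflect (x : ℝ × ℝ) : reflect c s (reflect c s x) = x := by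
  ext <;> simp only [reflect]
  · linear_combination x.1 * h
  · linear_combination x.2 * h

theorem dot_reflect_reflect (x y : ℝ × ℝ) :
    dot (reflect c s x) (reflect c s y) = dot x y := by
  simp only [dot, reflect]
  linear_combination (x.1 * y.1 + x.2 * y.2) * h

theorem cross_reflect_reflect (x y : ℝ × ℝ) :
    cross (reflect c s x) (reflect c s y) = -cross x y := by
  simp only [cross, reflect]
  linear_combination -(x.1 * y.2 - x.2 * y.1) * h

end Reflection

end Plane

open Plane

theorem rhoTheta_eq (θ : ℝ) (z : (ℝ × ℝ) × ℝ × ℝ) :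
    rhoTheta θ z =
      (reflect (Real.cos (2 * θ)) (Real.sin (2 * θ)) z.1,
        -reflect (Real.cos (2 * θ)) (Real.sin (2 * θ)) z.2) := by
  ext <;> simp only [rhoTheta, reflect, Prod.fst_neg, Prod.snd_neg] <;> ring

theorem omega0_eq_dot_sub_dot (v w : (ℝ × ℝ) × ℝ × ℝ) :
    omega0 v w = dot v.2 w.1 - dot w.2 v.1 := by
  simp only [omega0, dot]; ring

theorem rotKepler_eq (z : (ℝ × ℝ) × ℝ × ℝ) :
    rotKepler z = dot z.2 z.2 / 2 - 1 / Real.sqrt (dot z.1 z.1) + cross z.1 z.2 := by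
  simp only [rotKepler, dot, cross]; ring_nf

theorem rhoTheta_involution_antisymplectic_invariant_general (θ : ℝ) :
    (∀ z, rhoTheta θ (rhoTheta θ z) = z) ∧
    (∀ v w, omega0 (rhoTheta θ v) (rhoTheta θ w) = -omega0 v w) ∧
    (∀ z, rotKepler (rhoTheta θ z) = rotKepler z) := by
  have h := Real.cos_sq_add_sin_sq (2 * θ)
  refine ⟨fun z => ?_, fun v w => ?_, fun z => ?_⟩
  · simp only [rhoTheta_eq, reflect_neg, neg_neg, reflect_reflect h]
  · simp only [omega0_eq_dot_sub_dot, rhoTheta_eq, dot_neg_left, dot_reflect_reflect h]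
    ring
  · simp only [rotKepler_eq, rhoTheta_eq, dot_neg_left, dot_neg_right, dot_reflect_reflect h,
      cross_neg_right, cross_reflect_reflect h, neg_neg]

/-- for each `θ ∈ [0,π]`, the linear map `ρ_θ` is an involution,
is anti-symplectic for `ω₀` (being linear, it equals its own derivative), and
leaves the rotating Kepler Hamiltonian invariant. -/
theorem rhoTheta_involution_antisymplectic_invariant (θ : ℝ)
    (hθ : θ ∈ Set.Icc 0 Real.pi) :
    (∀ z, rhoTheta θ (rhoTheta θ z) = z) ∧
    (∀ v w, omega0 (rhoTheta θ v) (rhoTheta θ w) = -omega0 v w) ∧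
    (∀ z, rotKepler (rhoTheta θ z) = rotKepler z) :=
  rhoTheta_involution_antisymplectic_invariant_general θ
end
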